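/- Associativity of channel operators: for compatible channels C₁ : X×Y₁ → ℝ, C₂ : X×Y₂ → ℝ, C₃ : X×Y₃ → ℝ and p, q ∈ [0,1] with pq ≠ 1, setting p' = pq and q' = (q−pq)/(1−pq), one has (i) (C₁ ∥ C₂) ∥ C₃ ≐ C₁ ∥ (C₂ ∥ C₃); (ii) (C₁ ⊞_p C₂) ⊞_q C₃ ≐ C₁ ⊞_{p'} (C₂ ⊞_{q'} C₃); and (iii) (C₁ ⊕_p C₂) ⊕_q C₃ = C₁ ⊕_{p'} (C₂ ⊕_{q'} C₃) as functions on X×(Y₁ ∪ Y₂ ∪ Y₃). -/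

import Mathlib

open Finset

/-- A channel with input set `X` and output set `Y`: entries are nonnegative
and each row sums to `1`. -/
def IsChannel {X Y : Type*} [Fintype Y] (C : X → Y → ℝ) : Prop :=
  (∀ x y, 0 ≤ C x y) ∧ ∀ x, ∑ y, C x y = 1

/-- A channel with input set `X` whose output set is the finset `S` of a common
ambient type `Ω`: entries are nonnegative, each row sums to `1` over `S`, and
entries vanish outside `S`. -/
def IsChannelOn {X Ω : Type*} (S : Finset Ω) (C : X → Ω → ℝ) : Prop :=
  (∀ x y, 0 ≤ C x y) ∧ (∀ x, ∑ y ∈ S, C x y = 1) ∧ ∀ x y, y ∉ S → C x y = 0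

/-- Parallel composition `C₁ ∥ C₂`. -/
def par {X Y₁ Y₂ : Type*} (C₁ : X → Y₁ → ℝ) (C₂ : X → Y₂ → ℝ) : X → Y₁ × Y₂ → ℝ :=
  fun x y => C₁ x y.1 * C₂ x y.2

/-- Visible choice `C₁ ⊞_p C₂`, on the disjoint union of the output sets. -/
def vis {X Y₁ Y₂ : Type*} (p : ℝ) (C₁ : X → Y₁ → ℝ) (C₂ : X → Y₂ → ℝ) : X → Y₁ ⊕ Y₂ → ℝ :=
  fun x => Sum.elim (fun y => p * C₁ x y) (fun y => (1 - p) * C₂ x y)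

/-- Hidden choice `C₁ ⊕_p C₂` for channels whose output sets lie in a common
ambient type (pointwise convex combination; this agrees with the case analysis
on `Y₁ ∩ Y₂`, `Y₁ \ Y₂`, `Y₂ \ Y₁` since channels vanish outside their output sets). -/
def hid {X Ω : Type*} (p : ℝ) (C₁ C₂ : X → Ω → ℝ) : X → Ω → ℝ :=
  fun x y => p * C₁ x y + (1 - p) * C₂ x y

/-- Equality up to a permutation of the output set, `C₁ ≐ C₂`. -/
def PermEq {X Y₁ Y₂ : Type*} (C₁ : X → Y₁ → ℝ) (C₂ : X → Y₂ → ℝ) : Prop :=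
  ∃ ψ : Y₁ ≃ Y₂, ∀ x y, C₁ x y = C₂ x (ψ y)

/-- Cascading `CD` of channels. -/
def cascade {X Y Z : Type*} [Fintype Y] (C : X → Y → ℝ) (D : Y → Z → ℝ) : X → Z → ℝ :=
  fun x z => ∑ y, C x y * D y z

/-- `Refines C₁ C₂` (written `C₁ ⊑ C₂`): there is a channel `D` with `C₁D = C₂`. -/
def Refines {X Y₁ Y₂ : Type*} [Fintype Y₁] [Fintype Y₂] (C₁ : X → Y₁ → ℝ)
    (C₂ : X → Y₂ → ℝ) : Prop :=
  ∃ D : Y₁ → Y₂ → ℝ, IsChannel D ∧ cascade C₁ D = C₂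

/-- Equivalence of channels: mutual refinement. -/
def EquivCh {X Y₁ Y₂ : Type*} [Fintype Y₁] [Fintype Y₂] (C₁ : X → Y₁ → ℝ)
    (C₂ : X → Y₂ → ℝ) : Prop :=
  Refines C₁ C₂ ∧ Refines C₂ C₁

/-- A prior: a probability distribution on the finite input set `X`. -/
def IsPrior {X : Type*} [Fintype X] (π : X → ℝ) : Prop :=
  (∀ x, 0 ≤ π x) ∧ ∑ x, π x = 1

/-- A gain function `g : W × X → [0,1]`. -/
def IsGain {W X : Type*} (g : W → X → ℝ) : Prop :=
  ∀ w x, 0 ≤ g w x ∧ g w x ≤ 1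

/-- Posterior g-vulnerability `V_g[π, C]`. -/
noncomputable def postV {W X Y : Type*} [Fintype W] [Nonempty W] [Fintype X] [Fintype Y]
    (π : X → ℝ) (g : W → X → ℝ) (C : X → Y → ℝ) : ℝ :=
  ∑ y, univ.sup' univ_nonempty fun w => ∑ x, C x y * π x * g w x

/-!
Regrouping a nested choice preserves the weight of each channel: with `p' = pq` and
`q' = (q - pq)/(1 - pq)`, the weights `p'`, `(1 - p')q'`, `(1 - p')(1 - q')` of `C₁`, `C₂`, `C₃`
equal their original weights `pq`, `(1 - p)q`, `1 - q`.
-/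

section Weights

variable {p q : ℝ}

lemma one_sub_mul_mul_div_one_sub_mul (hpq : p * q ≠ 1) :
    (1 - p * q) * ((q - p * q) / (1 - p * q)) = (1 - p) * q := by
  rw [mul_div_cancel₀ _ (sub_ne_zero.mpr hpq.symm)]
  ring

lemma one_sub_mul_mul_one_sub_div_one_sub_mul (hpq : p * q ≠ 1) :
    (1 - p * q) * (1 - (q - p * q) / (1 - p * q)) = 1 - q := by
  rw [mul_one_sub, one_sub_mul_mul_div_one_sub_mul hpq]
  ring

end Weights

section Associativity

variable {X Y₁ Y₂ Y₃ : Type*} (C₁ : X → Y₁ → ℝ) (C₂ : X → Y₂ → ℝ) (C₃ : X → Y₃ → ℝ)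

lemma par_assoc_permEq : PermEq (par (par C₁ C₂) C₃) (par C₁ (par C₂ C₃)) :=
  ⟨Equiv.prodAssoc Y₁ Y₂ Y₃, fun _ _ => mul_assoc _ _ _⟩

lemma vis_assoc_permEq {p q : ℝ} (hpq : p * q ≠ 1) :
    PermEq (vis q (vis p C₁ C₂) C₃)
      (vis (p * q) C₁ (vis ((q - p * q) / (1 - p * q)) C₂ C₃)) := by
  refine ⟨Equiv.sumAssoc Y₁ Y₂ Y₃, ?_⟩
  rintro x ((y | y) | y) <;> simp only [vis, Equiv.sumAssoc_apply_inl_inl,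
    Equiv.sumAssoc_apply_inl_inr, Equiv.sumAssoc_apply_inr, Sum.elim_inl, Sum.elim_inr]
  · ring
  · rw [← mul_assoc (1 - p * q), one_sub_mul_mul_div_one_sub_mul hpq]
    ring
  · rw [← mul_assoc (1 - p * q), one_sub_mul_mul_one_sub_div_one_sub_mul hpq]

end Associativity

lemma hid_assoc {X Ω : Type*} (C₁ C₂ C₃ : X → Ω → ℝ) {p q : ℝ} (hpq : p * q ≠ 1) :
    hid q (hid p C₁ C₂) C₃ = hid (p * q) C₁ (hid ((q - p * q) / (1 - p * q)) C₂ C₃) := by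
  ext x y
  simp only [hid, mul_add, ← mul_assoc, one_sub_mul_mul_div_one_sub_mul hpq,
    one_sub_mul_mul_one_sub_div_one_sub_mul hpq]
  ring

theorem associativity_of_operators {X Ω : Type*} [DecidableEq Ω]
    (Y₁ Y₂ Y₃ : Finset Ω) (C₁ C₂ C₃ : X → Ω → ℝ)
    (p q : ℝ) (hpq : p * q ≠ 1) :
    PermEq (par (par C₁ C₂) C₃) (par C₁ (par C₂ C₃)) ∧
    PermEq (vis q (vis p C₁ C₂) C₃)
      (vis (p * q) C₁ (vis ((q - p * q) / (1 - p * q)) C₂ C₃)) ∧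
    ∀ x : X, ∀ y ∈ Y₁ ∪ Y₂ ∪ Y₃,
      hid q (hid p C₁ C₂) C₃ x y
        = hid (p * q) C₁ (hid ((q - p * q) / (1 - p * q)) C₂ C₃) x y :=
  ⟨par_assoc_permEq C₁ C₂ C₃, vis_assoc_permEq C₁ C₂ C₃ hpq,
    fun x y _ => congrFun (congrFun (hid_assoc C₁ C₂ C₃ hpq) x) y⟩
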